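/- arXiv:2211.04922 — 3 statements merged into one kernel-verified Lean document; each statement's English description precedes it below -/
import Mathlib

section
/- Let (E, 𝒫, ⪯) be an abstract network and let ρ, μ ∈ [0,1]^E satisfy ∑_{e∈P} ρ_e ≥ π_P := 1 − ∑_{e∈P} μ_e for all P ∈ 𝒫. Define α'_e := min{∑_{f ∈ (Q,e)} (μ_f + ρ_f) : Q ∈ 𝒫, e ∈ Q} and α_e := min{α'_e, 1 − ρ_e}. For τ drawn uniformly at random from [0,1], let S_τ := {e ∈ E : α_e ≤ τ < α_e + ρ_e}. Then x defined by x_S := Pr[S_τ = S] is a feasible decomposition of ρ for (E, 𝒫, π): ∑_{S∋e} x_S = ρ_e for all e ∈ E, and Pr[S_τ ∩ P ≠ ∅] ≥ π_P for all P ∈ 𝒫. -/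
open Finset MeasureTheory

variable {E : Type*} [Fintype E] [DecidableEq E]

/-- The strict prefix `(P,e)` of an abstract path `P` (given as a duplicate-free list)
before the element `e`. -/
def listPre (P : List E) (e : E) : Finset E := (P.takeWhile (· ≠ e)).toFinset

/-- The prefix `[P,e]` of `P` up to and including `e`. -/
def listPreIncl (P : List E) (e : E) : Finset E := listPre P e ∪ {e}

/-- The suffix `[e,P]` of `P` from `e` (inclusive). -/
def listSufIncl (P : List E) (e : E) : Finset E := (P.dropWhile (· ≠ e)).toFinset

/-- An abstract network: a system of paths, each a nonempty duplicate-free list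
(encoding the linear order `⪯_P`), such that for any two paths `P, Q` crossing in an
element `e` there is a path `R ∈ 𝒫` contained in `[P,e] ∪ [e,Q]`. -/
def IsAbstractNetwork (Ps : Finset (List E)) : Prop :=
  (∀ P ∈ Ps, P ≠ [] ∧ P.Nodup) ∧
  ∀ P ∈ Ps, ∀ Q ∈ Ps, ∀ e, e ∈ P → e ∈ Q →
    ∃ R ∈ Ps, R.toFinset ⊆ listPreIncl P e ∪ listSufIncl Q e

/-- The level set `S_τ = {e : α_e ≤ τ < α_e + ρ_e}`. -/
noncomputable def levelSet (α ρ : E → ℝ) (τ : ℝ) : Finset E :=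
  Finset.univ.filter (fun e => α e ≤ τ ∧ τ < α e + ρ e)

/-! For `τ ∈ [0,1)` the level set `S_τ` misses a path `P` only if `τ` lies in one of the gaps
`[α_e + ρ_e, α_e + ρ_e + μ_e)`, `e ∈ P`, of total length `∑_{e∈P} μ_e`, provided the intervals
`[α_e, α_e + μ_e + ρ_e)`, `e ∈ P`, cover `[0,1)`. If they do not, pick a path `R` whose intervals
avoid `τ` and whose weight `∑ (μ_e + ρ_e)` over elements with `α_e ≤ τ` is minimal. Since `R` has
weight `≥ 1 > τ`, some `p` in the initial stretch of `R` where `α ≤ τ` has `α_p` strictly below the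
weight of its prefix in `R`; then `α_p` is the prefix weight of `p` in another path `Q`, and the
path inside `[Q,p] ∪ [p,R]` given by the network axiom again avoids `τ` with smaller weight. -/

section AbstractNetwork

variable {V : Type*} [DecidableEq V]

lemma listPre_cons (a : V) (l : List V) (e : V) :
    listPre (a :: l) e = if a = e then ∅ else insert a (listPre l e) := by
  by_cases h : a = e <;> simp [listPre, h]

lemma listPre_append_of_mem {l : List V} {e : V} (he : e ∈ l) (l' : List V) :
    listPre (l ++ l') e = listPre l e := by
  induction l with
  | nil => simp at he
  | cons a l ih =>
    by_cases hae : a = e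
    · simp [listPre_cons, hae]
    · simp [listPre_cons, hae, ih ((List.mem_cons.1 he).resolve_left (Ne.symm hae))]

lemma listPre_append_of_notMem {l : List V} {e : V} (he : e ∉ l) (l' : List V) :
    listPre (l ++ l') e = l.toFinset ∪ listPre l' e := by
  induction l with
  | nil => simp
  | cons a l ih =>
    rw [List.mem_cons, not_or] at he
    simp [listPre_cons, Ne.symm he.1, ih he.2]

lemma insert_listPre_subset_listPre {P : List V} {e f : V} (hf : f ∈ listPre P e) :
    insert f (listPre P f) ⊆ listPre P e := by
  induction P with
  | nil => simp [listPre] at hf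
  | cons a l ih =>
    by_cases hae : a = e
    · simp [listPre_cons, hae] at hf
    by_cases haf : a = f
    · subst haf
      simp [listPre_cons, hae]
    rw [listPre_cons, if_neg hae] at hf
    rw [listPre_cons a l e, listPre_cons a l f, if_neg hae, if_neg haf, Finset.insert_comm]
    exact Finset.insert_subset_insert a
      (ih ((Finset.mem_insert.1 hf).resolve_left (Ne.symm haf)))

lemma listPre_subset_toFinset (P : List V) (e : V) : listPre P e ⊆ P.toFinset :=
  fun _ h => List.mem_toFinset.2 ((List.takeWhile_prefix _).sublist.subset (List.mem_toFinset.1 h))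

lemma listSufIncl_subset_toFinset (P : List V) (e : V) : listSufIncl P e ⊆ P.toFinset :=
  fun _ h => List.mem_toFinset.2 ((List.dropWhile_suffix _).sublist.subset (List.mem_toFinset.1 h))

lemma notMem_listPre_self (P : List V) (e : V) : e ∉ listPre P e := by
  intro h
  simpa using List.mem_takeWhile_imp (List.mem_toFinset.1 h)

lemma listPre_union_listSufIncl (P : List V) (e : V) :
    listPre P e ∪ listSufIncl P e = P.toFinset := by
  rw [listPre, listSufIncl, ← List.toFinset_append, List.takeWhile_append_dropWhile]

lemma disjoint_listPre_listSufIncl {P : List V} (hP : P.Nodup) (e : V) :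
    Disjoint (listPre P e) (listSufIncl P e) := by
  rw [listPre, listSufIncl, List.disjoint_toFinset_iff_disjoint]
  exact List.disjoint_of_nodup_append (List.takeWhile_append_dropWhile ▸ hP)

lemma mem_listSufIncl_self {P : List V} {e : V} (he : e ∈ P) : e ∈ listSufIncl P e := by
  have := listPre_union_listSufIncl P e ▸ List.mem_toFinset.2 he
  exact (Finset.mem_union.1 this).resolve_left (notMem_listPre_self P e)

/-- No interval `[α e, α e + w e)` with `e ∈ R` contains `τ`. -/
def Misses (α w : V → ℝ) (τ : ℝ) (R : List V) : Prop :=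
  ∀ e ∈ R, α e ≤ τ → α e + w e ≤ τ

noncomputable def lowWeight (α w : V → ℝ) (τ : ℝ) (R : List V) : ℝ :=
  ∑ e ∈ R.toFinset with α e ≤ τ, w e

/-- Contrapositive of the existence of a gap `α p < ∑_{(l,p)} w` along the initial stretch of `l`
where `α ≤ τ`. -/
lemma forall_le_and_sum_le_of_no_gap (l : List V) {α w : V → ℝ} {τ : ℝ} (hτ : 0 ≤ τ)
    (hα : ∀ e ∈ l, α e ≤ ∑ f ∈ listPre l e, w f) (hmiss : Misses α w τ l)
    (hno_gap : ∀ e ∈ l, α e ≤ τ → (∀ f ∈ listPre l e, α f ≤ τ) →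
      ∑ f ∈ listPre l e, w f ≤ α e) :
    (∀ e ∈ l, α e ≤ τ) ∧ ∑ e ∈ l.toFinset, w e ≤ τ := by
  induction l using List.reverseRecOn with
  | nil => simpa using hτ
  | append_singleton l a ih =>
    have hpre : ∀ e ∈ l, listPre (l ++ [a]) e = listPre l e :=
      fun e he => listPre_append_of_mem he [a]
    have hpre_a (ha : a ∉ l) : listPre (l ++ [a]) a = l.toFinset := by
      simpa [listPre] using listPre_append_of_notMem ha [a]
    obtain ⟨hlow, hsum⟩ := ih (fun e he => hpre e he ▸ hα e (by simp [he]))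
      (fun e he => hmiss e (by simp [he]))
      (fun e he => hpre e he ▸ hno_gap e (by simp [he]))
    have hαa : α a ≤ τ := by
      by_cases ha : a ∈ l
      · exact hlow a ha
      · linarith [hpre_a ha ▸ hα a (by simp)]
    refine ⟨fun e he => ?_, ?_⟩
    · rcases List.mem_append.1 he with he | he
      exacts [hlow e he, List.mem_singleton.1 he ▸ hαa]
    have hfin : (l ++ [a]).toFinset = insert a l.toFinset := by
      ext
      simp
    rw [hfin]
    by_cases ha : a ∈ l
    · rwa [Finset.insert_eq_of_mem (List.mem_toFinset.2 ha)]
    have hsum_a := hpre_a ha ▸ hno_gap a (by simp) hαa (by simpa [hpre_a ha] using hlow)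
    rw [Finset.sum_insert (by simpa using ha)]
    linarith [hmiss a (by simp) hαa]

variable {Ps : Finset (List V)} {α w : V → ℝ} {τ : ℝ}

lemma exists_misses_lowWeight_lt (hAN : IsAbstractNetwork Ps) (hw : ∀ e, 0 ≤ w e)
    (hlong : ∀ P ∈ Ps, 1 ≤ ∑ e ∈ P.toFinset, w e)
    (hα : ∀ e, ∀ Q ∈ Ps, e ∈ Q → α e ≤ ∑ f ∈ listPre Q e, w f)
    (hattain : ∀ e, 1 ≤ α e + w e ∨ ∃ Q ∈ Ps, e ∈ Q ∧ α e = ∑ f ∈ listPre Q e, w f)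
    (hτ : τ ∈ Set.Ico 0 1) {R : List V} (hR : R ∈ Ps) (hmiss : Misses α w τ R) :
    ∃ R' ∈ Ps, Misses α w τ R' ∧ lowWeight α w τ R' < lowWeight α w τ R := by
  obtain ⟨p, hpR, hpτ, hpre_low, hgap⟩ : ∃ p ∈ R, α p ≤ τ ∧ (∀ f ∈ listPre R p, α f ≤ τ) ∧
      α p < ∑ f ∈ listPre R p, w f := by
    by_contra! h
    have := (forall_le_and_sum_le_of_no_gap R hτ.1 (fun e he => hα e R hR he) hmiss h).2
    linarith [hlong R hR, hτ.2]
  obtain ⟨Q, hQ, hpQ, hαp⟩ := (hattain p).resolve_left (by linarith [hmiss p hpR hpτ, hτ.2])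
  obtain ⟨R', hR', hR'sub⟩ := hAN.2 Q hQ R hR p hpQ hpR
  have hsub : R'.toFinset ⊆ listPre Q p ∪ listSufIncl R p := by
    rwa [listPreIncl, Finset.union_assoc, Finset.union_eq_right.2
      (Finset.singleton_subset_iff.2 (mem_listSufIncl_self hpR))] at hR'sub
  have hQshort : ∀ f ∈ listPre Q p, α f + w f ≤ α p := by
    intro f hf
    have h1 := hα f Q hQ (List.mem_toFinset.1 (listPre_subset_toFinset Q p hf))
    have h2 := Finset.sum_le_sum_of_subset_of_nonneg (insert_listPre_subset_listPre hf)
      (fun i _ _ => hw i)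
    rw [Finset.sum_insert (notMem_listPre_self Q f)] at h2
    linarith
  refine ⟨R', hR', fun e he heτ => ?_, ?_⟩
  · rcases Finset.mem_union.1 (hsub (List.mem_toFinset.2 he)) with h | h
    · linarith [hQshort e h]
    · exact hmiss e (List.mem_toFinset.1 (listSufIncl_subset_toFinset R p h)) heτ
  set S := (listSufIncl R p).filter (α · ≤ τ)
  calc lowWeight α w τ R' ≤ ∑ e ∈ listPre Q p ∪ S, w e := by
        refine Finset.sum_le_sum_of_subset_of_nonneg (fun e he => ?_) (fun i _ _ => hw i)
        obtain ⟨he, heτ⟩ := Finset.mem_filter.1 he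
        rcases Finset.mem_union.1 (hsub he) with h | h
        exacts [Finset.mem_union_left _ h, Finset.mem_union_right _ (Finset.mem_filter.2 ⟨h, heτ⟩)]
    _ ≤ ∑ e ∈ listPre Q p, w e + ∑ e ∈ S, w e := by
        rw [← Finset.sum_union_inter]
        exact le_add_of_nonneg_right (Finset.sum_nonneg fun i _ => hw i)
    _ < ∑ e ∈ listPre R p, w e + ∑ e ∈ S, w e := by linarith
    _ = lowWeight α w τ R := by
        rw [lowWeight, ← listPre_union_listSufIncl R p, Finset.filter_union,
          Finset.sum_union (Finset.disjoint_filter_filter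
            (disjoint_listPre_listSufIncl (hAN.1 R hR).2 p)),
          Finset.filter_true_of_mem hpre_low]

theorem exists_mem_Ico_of_isAbstractNetwork (hAN : IsAbstractNetwork Ps) (hw : ∀ e, 0 ≤ w e)
    (hlong : ∀ P ∈ Ps, 1 ≤ ∑ e ∈ P.toFinset, w e)
    (hα : ∀ e, ∀ Q ∈ Ps, e ∈ Q → α e ≤ ∑ f ∈ listPre Q e, w f)
    (hattain : ∀ e, 1 ≤ α e + w e ∨ ∃ Q ∈ Ps, e ∈ Q ∧ α e = ∑ f ∈ listPre Q e, w f)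
    (hτ : τ ∈ Set.Ico 0 1) {P : List V} (hP : P ∈ Ps) :
    ∃ e ∈ P, τ ∈ Set.Ico (α e) (α e + w e) := by
  classical
  by_contra! h
  have hPmiss : Misses α w τ P := fun e he heτ => by simpa [heτ] using h e he
  obtain ⟨R, hR, hmin⟩ := (Ps.filter (Misses α w τ)).exists_min_image (lowWeight α w τ)
    ⟨P, Finset.mem_filter.2 ⟨hP, hPmiss⟩⟩
  obtain ⟨hRPs, hRmiss⟩ := Finset.mem_filter.1 hR
  obtain ⟨R', hR', hR'miss, hlt⟩ :=
    exists_misses_lowWeight_lt hAN hw hlong hα hattain hτ hRPs hRmiss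
  exact (hmin R' (Finset.mem_filter.2 ⟨hR', hR'miss⟩)).not_gt hlt

end AbstractNetwork

section LevelSet

variable {V : Type*} [Fintype V] (α ρ : V → ℝ)

lemma measurableSet_setOf_levelSet_eq (S : Finset V) : MeasurableSet {τ | levelSet α ρ τ = S} := by
  have : {τ | levelSet α ρ τ = S} = ⋂ e, {τ | τ ∈ Set.Ico (α e) (α e + ρ e) ↔ e ∈ S} := by
    ext τ
    simp [levelSet, Finset.ext_iff]
  rw [this]
  exact MeasurableSet.iInter fun e =>
    measurableSet_setOfPred.2 ((measurableSet_setOfPred.1 measurableSet_Ico).iff measurable_const)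

lemma volume_sep_Ico_ne_top (p : ℝ → Prop) : volume {τ ∈ Set.Ico (0 : ℝ) 1 | p τ} ≠ ⊤ :=
  ((measure_mono (Set.sep_subset _ _)).trans_lt measure_Ico_lt_top).ne

lemma sum_measureReal_levelSet_eq (q : Finset V → Prop) [DecidablePred q] :
    ∑ S with q S, volume.real {τ ∈ Set.Ico (0 : ℝ) 1 | levelSet α ρ τ = S} =
      volume.real {τ ∈ Set.Ico (0 : ℝ) 1 | q (levelSet α ρ τ)} := by
  have hdisj : Set.PairwiseDisjoint ↑(Finset.univ.filter q)
      fun S => {τ ∈ Set.Ico (0 : ℝ) 1 | levelSet α ρ τ = S} := fun S _ S' _ hne =>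
    Set.disjoint_left.2 fun τ h h' => hne (h.2.symm.trans h'.2)
  rw [← measureReal_biUnion_finset hdisj
    (fun S _ => measurableSet_Ico.inter (measurableSet_setOf_levelSet_eq α ρ S))
    (fun S _ => volume_sep_Ico_ne_top _)]
  congr 1
  ext τ
  simp

lemma measureReal_mem_levelSet {e : V} (h0 : 0 ≤ α e) (hρ : 0 ≤ ρ e) (h1 : α e + ρ e ≤ 1) :
    volume.real {τ ∈ Set.Ico (0 : ℝ) 1 | e ∈ levelSet α ρ τ} = ρ e := by
  have : {τ ∈ Set.Ico (0 : ℝ) 1 | e ∈ levelSet α ρ τ} = Set.Ico (α e) (α e + ρ e) := by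
    ext τ
    simp only [levelSet, Set.mem_ofPred_eq, Set.mem_Ico, Finset.mem_filter, Finset.mem_univ,
      true_and]
    constructor
    · exact fun h => h.2
    · exact fun h => ⟨⟨by linarith, by linarith⟩, h⟩
  rw [this, Real.volume_real_Ico_of_le (by linarith), add_sub_cancel_left]

lemma one_sub_sum_le_measureReal_hit [DecidableEq V] (μ : V → ℝ) (hμ : ∀ e, 0 ≤ μ e)
    (s : Finset V)
    (hcover : ∀ τ ∈ Set.Ico (0 : ℝ) 1, ∃ e ∈ s, τ ∈ Set.Ico (α e) (α e + (μ e + ρ e))) :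
    1 - ∑ e ∈ s, μ e ≤
      volume.real {τ ∈ Set.Ico (0 : ℝ) 1 | (levelSet α ρ τ ∩ s).Nonempty} := by
  set H := {τ ∈ Set.Ico (0 : ℝ) 1 | (levelSet α ρ τ ∩ s).Nonempty}
  have hsub : Set.Ico 0 1 ⊆ H ∪ ⋃ e ∈ s, Set.Ico (α e + ρ e) (α e + ρ e + μ e) := by
    intro τ hτ
    obtain ⟨e, he, h1, h2⟩ := hcover τ hτ
    by_cases hlt : τ < α e + ρ e
    · exact Or.inl ⟨hτ, e, Finset.mem_inter.2 ⟨by simp [levelSet, h1, hlt], he⟩⟩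
    · exact Or.inr (Set.mem_biUnion he ⟨not_lt.1 hlt, by linarith⟩)
  calc 1 - ∑ e ∈ s, μ e
      = volume.real (Set.Ico (0 : ℝ) 1) - ∑ e ∈ s, volume.real
          (Set.Ico (α e + ρ e) (α e + ρ e + μ e)) := by
        simp [hμ]
    _ ≤ volume.real H := by
        linarith [measureReal_mono hsub (measure_union_ne_top
          (volume_sep_Ico_ne_top _)
          (measure_biUnion_lt_top s.finite_toSet fun e _ => measure_Ico_lt_top).ne),
          measureReal_union_le (μ := volume) H
          (⋃ e ∈ s, Set.Ico (α e + ρ e) (α e + ρ e + μ e)),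
          measureReal_biUnion_finset_le (μ := volume) s
            (fun e => Set.Ico (α e + ρ e) (α e + ρ e + μ e))]

end LevelSet

/-- The interval assignment via truncated shortest-path labels `α` yields a feasible
decomposition of `ρ` for an abstract network with affine requirements
`π_P = 1 − ∑_{e∈P} μ_e`: for `τ` uniform in `[0,1)`, the distribution of
`S_τ = {e : α_e ≤ τ < α_e + ρ_e}` has marginals `ρ` and hits each path `P ∈ 𝒫`
with probability at least `π_P`. -/
theorem abstract_network_feasible_decomposition
    (Ps : Finset (List E)) (hAN : IsAbstractNetwork Ps)
    (ρ μ : E → ℝ) (hρ : ∀ e, 0 ≤ ρ e ∧ ρ e ≤ 1) (hμ : ∀ e, 0 ≤ μ e ∧ μ e ≤ 1)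
    (π : List E → ℝ) (hπ : ∀ P ∈ Ps, π P = 1 - ∑ e ∈ P.toFinset, μ e)
    (hcond : ∀ P ∈ Ps, π P ≤ ∑ e ∈ P.toFinset, ρ e)
    (α : E → ℝ)
    -- `α e = min { ∑_{f ∈ (Q,e)} (μ f + ρ f) : Q ∈ 𝒫, e ∈ Q } ∪ {1 - ρ e}`:
    (hα₁ : ∀ e, α e ≤ 1 - ρ e)
    (hα₂ : ∀ e, ∀ Q ∈ Ps, e ∈ Q → α e ≤ ∑ f ∈ listPre Q e, (μ f + ρ f))
    (hα₃ : ∀ e, α e = 1 - ρ e ∨ ∃ Q ∈ Ps, e ∈ Q ∧ α e = ∑ f ∈ listPre Q e, (μ f + ρ f))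
    (x : Finset E → ℝ)
    (hx : ∀ S : Finset E,
      x S = (volume {τ ∈ Set.Ico (0:ℝ) 1 | levelSet α ρ τ = S}).toReal) :
    (∀ S, 0 ≤ x S) ∧ (∑ S : Finset E, x S = 1) ∧
    (∀ e : E, ∑ S ∈ Finset.univ.filter (fun S : Finset E => e ∈ S), x S = ρ e) ∧
    (∀ P ∈ Ps, π P ≤
      ∑ S ∈ Finset.univ.filter (fun S : Finset E => (S ∩ P.toFinset).Nonempty), x S) := by
  have hw : ∀ e, 0 ≤ μ e + ρ e := fun e => add_nonneg (hμ e).1 (hρ e).1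
  have hα₀ : ∀ e, 0 ≤ α e := fun e => by
    rcases hα₃ e with h | ⟨Q, -, -, h⟩
    · linarith [(hρ e).2]
    · exact h ▸ Finset.sum_nonneg fun f _ => hw f
  have hlong : ∀ P ∈ Ps, 1 ≤ ∑ e ∈ P.toFinset, (μ e + ρ e) := fun P hP => by
    rw [Finset.sum_add_distrib]
    linarith [hπ P hP, hcond P hP]
  have hattain : ∀ e, 1 ≤ α e + (μ e + ρ e) ∨
      ∃ Q ∈ Ps, e ∈ Q ∧ α e = ∑ f ∈ listPre Q e, (μ f + ρ f) :=
    fun e => (hα₃ e).imp_left fun h => by linarith [(hμ e).1]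
  simp only [hx, ← measureReal_def, sum_measureReal_levelSet_eq]
  refine ⟨fun S => measureReal_nonneg, ?_, fun e => ?_, fun P hP => ?_⟩
  · have := sum_measureReal_levelSet_eq α ρ (fun _ => True)
    rwa [Finset.filter_true, Set.sep_true, Real.volume_real_Ico_of_le zero_le_one, sub_zero]
      at this
  · exact measureReal_mem_levelSet α ρ (hα₀ e) (hρ e).1 (by linarith [hα₁ e])
  · rw [hπ P hP]
    exact one_sub_sum_le_measureReal_hit α ρ μ (fun e => (hμ e).1) _ fun τ hτ =>
      (exists_mem_Ico_of_isAbstractNetwork hAN hw hlong hα₂ hattain hτ hP).imp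
        fun e ⟨he, h⟩ => ⟨List.mem_toFinset.2 he, h⟩
end

section
/- Let (E, 𝒫) be a set system with the weak MFMC property (the polyhedron Y_𝒫 := {y ∈ ℝ_+^E : ∑_{e∈P} y_e ≥ 1 ∀P ∈ 𝒫} is integral), let μ ∈ (0,1]^E be strictly positive, and let π_P := 1 − ∑_{e∈P} μ_e. Suppose ρ ∈ [0,1]^E satisfies ∑_{e∈P} ρ_e ≥ π_P for all P ∈ 𝒫, and for every e ∈ E with ρ_e > 0 there is P ∈ 𝒫 with e ∈ P and ∑_{f∈P} ρ_f = π_P. Then there exists a feasible decomposition x of ρ for (E, 𝒫, π) with x_∅ > 0. -/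
/-!
Put `y = min (ρ + μ) 1`. It lies in the truncated polytope `Q = Y_𝒫 ∩ [0,1]^E`, and `ρ < y`
because an element with positive marginal lies on a tight path, which forces `ρ_e < 1`.

Weak MFMC makes every extreme point `z` of `Q` a `0/1` vector: release the coordinates where
`z = 1`; an extreme point of the released polyhedron minimising `∑ w` is an extreme point of
`Y_𝒫` that agrees with `z` on every coordinate where `z < 1`, so these coordinates are integers.
By Krein–Milman, `y` is then a convex combination of incidence vectors of covers `C`.

Round each cover by keeping every `e ∈ C` independently with probability `ρ_e / y_e`. The
marginals become `ρ`, a path `P` is missed with probability at most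
`∑_{e ∈ P} (y_e - ρ_e) ≤ ∑_{e ∈ P} μ_e`, and since `ρ < y` the empty set keeps positive mass.
-/

open Finset Filter Topology

/-- The covering polyhedron `Y_𝒫 = {y ∈ ℝ₊^E : ∑_{e ∈ P} y_e ≥ 1 ∀ P ∈ 𝒫}`. -/
def coverPolyhedron {E : Type*} [Fintype E] (Ps : Finset (Finset E)) : Set (E → ℝ) :=
  {y | (∀ e, 0 ≤ y e) ∧ ∀ P ∈ Ps, 1 ≤ ∑ e ∈ P, y e}

/-- A feasible decomposition: a probability distribution `x` on `2^E` with marginals `ρ`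
hitting each `P ∈ 𝒫` with probability at least `π P`. -/
def IsFeasibleDecomp {E : Type*} [Fintype E] [DecidableEq E]
    (Ps : Finset (Finset E)) (π : Finset E → ℝ) (ρ : E → ℝ)
    (x : Finset E → ℝ) : Prop :=
  (∀ S, 0 ≤ x S) ∧ (∑ S : Finset E, x S = 1) ∧
  (∀ e : E, ∑ S ∈ Finset.univ.filter (fun S : Finset E => e ∈ S), x S = ρ e) ∧
  (∀ P ∈ Ps, π P ≤ ∑ S ∈ Finset.univ.filter (fun S : Finset E => (S ∩ P).Nonempty), x S)

section ExtremePoints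

variable {V : Type*} [AddCommGroup V] [Module ℝ V] {A : Set V} {x δ : V}

theorem eq_zero_of_add_mem_of_sub_mem (hx : x ∈ A.extremePoints ℝ) (h₁ : x + δ ∈ A)
    (h₂ : x - δ ∈ A) : δ = 0 := by
  have hmid : x ∈ openSegment ℝ (x + δ) (x - δ) :=
    ⟨1 / 2, 1 / 2, by norm_num, by norm_num, by norm_num, by module⟩
  exact add_eq_left.mp (hx.2 h₁ h₂ hmid)

/-- With `b = 1 - a`, the points `x ± a b (x₂ - x₁)` are the convex combinations
`a² x₁ + b (1 + a) x₂` and `a (1 + b) x₁ + b² x₂`. -/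
theorem mem_extremePoints_of_add_mem_of_sub_mem (hA : Convex ℝ A) (hx : x ∈ A)
    (h : ∀ δ, x + δ ∈ A → x - δ ∈ A → δ = 0) : x ∈ A.extremePoints ℝ := by
  refine ⟨hx, fun x₁ hx₁ x₂ hx₂ ⟨a, b, ha, hb, hab, hsum⟩ => ?_⟩
  obtain rfl : b = 1 - a := by linarith
  have hδ := h ((a * (1 - a)) • (x₂ - x₁))
    (by
      convert hA hx₁ hx₂ (sq_nonneg a) (mul_nonneg hb.le (by linarith : 0 ≤ 1 + a))
        (by ring) using 1
      rw [← hsum]; module)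
    (by
      convert hA hx₁ hx₂ (mul_nonneg ha.le (by linarith : 0 ≤ 1 + (1 - a))) (sq_nonneg (1 - a))
        (by ring) using 1
      rw [← hsum]; module)
  obtain rfl : x₁ = x₂ :=
    (sub_eq_zero.1 ((smul_eq_zero.1 hδ).resolve_left (mul_pos ha hb).ne')).symm
  rw [← hsum, ← add_smul, add_sub_cancel, one_smul]

theorem eq_zero_of_eventually_add_smul_mem (hx : x ∈ A.extremePoints ℝ)
    (h : ∀ᶠ t in 𝓝 (0 : ℝ), x + t • δ ∈ A) : δ = 0 := by
  have hneg : ∀ᶠ t in 𝓝 (0 : ℝ), x + (-t) • δ ∈ A :=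
    (continuous_neg.tendsto' 0 0 neg_zero).eventually h
  obtain ⟨t, ⟨hp, hm⟩, ht⟩ := ((h.and hneg).filter_mono nhdsWithin_le_nhds |>.and
    self_mem_nhdsWithin).exists (f := 𝓝[≠] (0 : ℝ))
  rw [neg_smul, ← sub_eq_add_neg] at hm
  exact (smul_eq_zero.1 (eq_zero_of_add_mem_of_sub_mem hx hp hm)).resolve_left ht

theorem IsCompact.exists_mem_extremePoints_isMinOn [TopologicalSpace V] [T2Space V]
    [IsTopologicalAddGroup V] [ContinuousSMul ℝ V] [LocallyConvexSpace ℝ V]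
    (hA : IsCompact A) (hne : A.Nonempty) (l : V →L[ℝ] ℝ) :
    ∃ x ∈ A.extremePoints ℝ, IsMinOn l A x := by
  have hexp := ContinuousLinearMap.toExposed.isExposed (𝕜 := ℝ) (l := -l) (A := A)
  obtain ⟨x₀, hx₀, hmax⟩ := hA.exists_isMaxOn hne (-l).continuous.continuousOn
  obtain ⟨x, hx⟩ := (hexp.isCompact hA).extremePoints_nonempty ⟨x₀, hx₀, hmax⟩
  exact ⟨x, hexp.isExtreme.extremePoints_subset_extremePoints hx,
    fun y hy => neg_le_neg_iff.1 (hx.1.2 y hy)⟩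

end ExtremePoints

theorem eventually_le_add_mul {a c d : ℝ} (h : c ≤ a) (hd : a = c → d = 0) :
    ∀ᶠ t in 𝓝 (0 : ℝ), c ≤ a + t * d := by
  rcases h.eq_or_lt with rfl | hlt
  · simp [hd rfl]
  · have hcont : Tendsto (fun t : ℝ => a + t * d) (𝓝 0) (𝓝 a) := by
      have : Continuous (fun t : ℝ => a + t * d) := by fun_prop
      simpa using this.tendsto 0
    exact (hcont.eventually (lt_mem_nhds hlt)).mono fun _ => le_of_lt

theorem eventually_add_mul_le {a c d : ℝ} (h : a ≤ c) (hd : a = c → d = 0) :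
    ∀ᶠ t in 𝓝 (0 : ℝ), a + t * d ≤ c := by
  filter_upwards [eventually_le_add_mul (d := -d) (neg_le_neg h)
    fun he => neg_eq_zero.2 (hd (neg_inj.1 he))] with t ht
  linarith

section CoverPolyhedron

variable {E : Type*} [Fintype E] (Ps : Finset (Finset E))

theorem convex_coverPolyhedron : Convex ℝ (coverPolyhedron Ps) := by
  intro u ⟨hu₀, huP⟩ v ⟨hv₀, hvP⟩ a b ha hb hab
  refine ⟨fun e => ?_, fun P hP => ?_⟩
  · simpa using add_nonneg (mul_nonneg ha (hu₀ e)) (mul_nonneg hb (hv₀ e))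
  · simp only [Pi.add_apply, Pi.smul_apply, smul_eq_mul, sum_add_distrib, ← mul_sum]
    nlinarith [huP P hP, hvP P hP]

theorem isClosed_coverPolyhedron : IsClosed (coverPolyhedron Ps) := by
  simp only [coverPolyhedron, Set.ofPred_and, Set.ofPred_forall]
  exact (isClosed_iInter fun e => isClosed_le continuous_const (continuous_apply e)).inter
    (isClosed_iInter fun P => isClosed_iInter fun _ => isClosed_le continuous_const (by fun_prop))

variable {Ps} in
theorem isCompact_of_subset_coverPolyhedron {K : Set (E → ℝ)} (hK : IsClosed K)
    (hKY : K ⊆ coverPolyhedron Ps) {c : ℝ} (hc : ∀ y ∈ K, ∀ e, y e ≤ c) : IsCompact K :=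
  (isCompact_univ_pi fun _ => isCompact_Icc).of_isClosed_subset hK
    fun y hy e _ => ⟨(hKY hy).1 e, hc y hy e⟩

def coverPolytope : Set (E → ℝ) :=
  coverPolyhedron Ps ∩ {y | ∀ e, y e ≤ 1}

theorem convex_coverPolytope : Convex ℝ (coverPolytope Ps) :=
  (convex_coverPolyhedron Ps).inter fun u hu v hv a b ha hb hab e => by
    simp only [Pi.add_apply, Pi.smul_apply, smul_eq_mul]
    nlinarith [hu e, hv e]

theorem isCompact_coverPolytope : IsCompact (coverPolytope Ps) := by
  refine isCompact_of_subset_coverPolyhedron ?_ Set.inter_subset_left fun y hy => hy.2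
  simp only [coverPolytope, Set.ofPred_forall]
  exact (isClosed_coverPolyhedron Ps).inter
    (isClosed_iInter fun e => isClosed_le (continuous_apply e) continuous_const)

variable {Ps} in
theorem min_one_mem_coverPolytope {y : E → ℝ} (hy : y ∈ coverPolyhedron Ps) :
    (fun e => min (y e) 1) ∈ coverPolytope Ps := by
  have hmin₀ : ∀ e, 0 ≤ min (y e) 1 := fun e => le_min (hy.1 e) zero_le_one
  refine ⟨⟨hmin₀, fun P hP => ?_⟩, fun e => min_le_right _ _⟩
  by_cases h : ∀ e ∈ P, y e ≤ 1
  · rw [sum_congr rfl fun e he => min_eq_left (h e he)]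
    exact hy.2 P hP
  · push Not at h
    obtain ⟨e, he, h₁⟩ := h
    calc 1 = min (y e) 1 := (min_eq_right h₁.le).symm
      _ ≤ ∑ f ∈ P, min (y f) 1 := single_le_sum (fun f _ => hmin₀ f) he

end CoverPolyhedron

section ExtremePointsOfCoverPolytope

variable {E : Type*} [Fintype E] {Ps : Finset (Finset E)} {z w δ : E → ℝ}

theorem eventually_add_smul_mem_coverPolytope (hz : z ∈ coverPolytope Ps)
    (h₀ : ∀ e, z e = 0 → δ e = 0) (h₁ : ∀ e, z e = 1 → δ e = 0)
    (hsum : ∀ P ∈ Ps, ∑ e ∈ P, z e = 1 → ∑ e ∈ P, δ e = 0) :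
    ∀ᶠ t in 𝓝 (0 : ℝ), z + t • δ ∈ coverPolytope Ps := by
  obtain ⟨⟨hz₀, hzP⟩, hz₁⟩ := hz
  have hcoord : ∀ e, ∀ᶠ t in 𝓝 (0 : ℝ), 0 ≤ z e + t * δ e ∧ z e + t * δ e ≤ 1 := fun e =>
    (eventually_le_add_mul (hz₀ e) (h₀ e)).and (eventually_add_mul_le (hz₁ e) (h₁ e))
  have hpath : ∀ P ∈ Ps, ∀ᶠ t in 𝓝 (0 : ℝ), 1 ≤ ∑ e ∈ P, z e + t * ∑ e ∈ P, δ e :=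
    fun P hP => eventually_le_add_mul (hzP P hP) (hsum P hP)
  filter_upwards [eventually_all.2 hcoord, (eventually_all_finset Ps).2 hpath] with t ht htP
  refine ⟨⟨fun e => (ht e).1, fun P hP => ?_⟩, fun e => (ht e).2⟩
  simpa [sum_add_distrib, mul_sum] using htP P hP

variable (Ps) in
/-- The cap `2` only makes the set compact: a minimizer of `∑ e, w e` stays below it. -/
def releasedCoverPolyhedron (z : E → ℝ) : Set (E → ℝ) :=
  {w ∈ coverPolyhedron Ps | (∀ e, z e < 1 → w e = z e) ∧ ∀ e, w e ≤ 2}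

theorem mem_releasedCoverPolyhedron_self (hz : z ∈ coverPolytope Ps) :
    z ∈ releasedCoverPolyhedron Ps z :=
  ⟨hz.1, fun _ _ => rfl, fun e => (hz.2 e).trans one_le_two⟩

variable (Ps) in
theorem isCompact_releasedCoverPolyhedron (z : E → ℝ) :
    IsCompact (releasedCoverPolyhedron Ps z) := by
  refine isCompact_of_subset_coverPolyhedron ?_ (fun w hw => hw.1) fun w hw => hw.2.2
  have : releasedCoverPolyhedron Ps z = coverPolyhedron Ps ∩
      (⋂ e ∈ {e | z e < 1}, {w | w e = z e}) ∩ ⋂ e, {w | w e ≤ 2} := by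
    ext w
    simp only [releasedCoverPolyhedron, Set.mem_inter_iff, Set.mem_iInter, Set.mem_ofPred_eq]
    tauto
  rw [this]
  exact ((isClosed_coverPolyhedron Ps).inter (isClosed_biInter fun e _ =>
    isClosed_eq (continuous_apply e) continuous_const)).inter
    (isClosed_iInter fun e => isClosed_le (continuous_apply e) continuous_const)

theorem lt_two_of_isMinOn (hw : w ∈ releasedCoverPolyhedron Ps z)
    (hmin : IsMinOn (fun v => ∑ e, v e) (releasedCoverPolyhedron Ps z) w) (e : E) : w e < 2 := by
  classical
  obtain ⟨⟨hw₀, hwP⟩, hpin, hw₂⟩ := hw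
  by_contra! h
  have hze : ¬z e < 1 := fun hze => by linarith [hpin e hze]
  -- lowering `w e` from `2` to `1` keeps every path covered but decreases the sum
  have hlower : w - Pi.single e 1 ∈ releasedCoverPolyhedron Ps z := by
    refine ⟨⟨fun f => ?_, fun P hP => ?_⟩, fun f hf => ?_, fun f => ?_⟩
    · rcases eq_or_ne f e with rfl | hf
      · simp only [Pi.sub_apply, Pi.single_eq_same]; linarith
      · simpa [hf] using hw₀ f
    · simp only [Pi.sub_apply, sum_sub_distrib, sum_pi_single']
      split_ifs with he
      · linarith [single_le_sum (fun f _ => hw₀ f) he]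
      · simpa using hwP P hP
    · have hfe : f ≠ e := by rintro rfl; exact hze hf
      simpa [hfe] using hpin f hf
    · rcases eq_or_ne f e with rfl | hf
      · simp only [Pi.sub_apply, Pi.single_eq_same]; linarith [hw₂ f]
      · simpa [hf] using hw₂ f
  have := hmin hlower
  simp only [Set.mem_ofPred_eq, Pi.sub_apply, sum_sub_distrib, sum_pi_single', mem_univ,
    if_true] at this
  linarith

theorem eq_zero_of_add_sub_mem_of_lt_one (hz : z ∈ (coverPolytope Ps).extremePoints ℝ)
    (hw : w ∈ releasedCoverPolyhedron Ps z) (h₁ : w + δ ∈ coverPolyhedron Ps)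
    (h₂ : w - δ ∈ coverPolyhedron Ps) {e : E} (he : z e < 1) : δ e = 0 := by
  obtain ⟨-, hpin, -⟩ := hw
  have hzero : ∀ f, z f = 0 → δ f = 0 := fun f hf => by
    by_cases hf1 : z f < 1
    · have hplus := h₁.1 f
      have hminus := h₂.1 f
      simp only [Pi.add_apply, Pi.sub_apply, hpin f hf1, hf] at hplus hminus
      linarith
    · linarith
  suffices hδ : (fun f => if z f < 1 then δ f else 0) = 0 by simpa [he] using congrFun hδ e
  refine eq_zero_of_eventually_add_smul_mem hz (eventually_add_smul_mem_coverPolytope hz.1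
    (fun f hf => by simp [hzero f hf]) (fun f hf => by simp [hf]) fun P hP htight => ?_)
  by_cases hall : ∀ f ∈ P, z f < 1
  · have hwP : ∑ f ∈ P, w f = 1 := (sum_congr rfl fun f hf => hpin f (hall f hf)).trans htight
    have hplus := h₁.2 P hP
    have hminus := h₂.2 P hP
    simp only [Pi.add_apply, Pi.sub_apply, sum_add_distrib, sum_sub_distrib, hwP] at hplus hminus
    rw [sum_congr rfl fun f hf => if_pos (hall f hf)]
    linarith
  · -- a tight path through a coordinate equal to `1` vanishes elsewhere
    push Not at hall
    obtain ⟨g, hgP, hg⟩ := hall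
    refine sum_eq_zero fun f hf => ?_
    by_cases hf1 : z f < 1
    · have hfg : f ≠ g := by rintro rfl; linarith
      have := add_le_sum (fun i _ => hz.1.1.1 i) hf hgP hfg
      simp [hf1, hzero f (by linarith [hz.1.1.1 f])]
    · simp [hf1]

theorem mem_extremePoints_coverPolyhedron_of_isMinOn (hz : z ∈ (coverPolytope Ps).extremePoints ℝ)
    (hw : w ∈ (releasedCoverPolyhedron Ps z).extremePoints ℝ)
    (hmin : IsMinOn (fun v => ∑ e, v e) (releasedCoverPolyhedron Ps z) w) :
    w ∈ (coverPolyhedron Ps).extremePoints ℝ := by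
  refine mem_extremePoints_of_add_mem_of_sub_mem (convex_coverPolyhedron Ps) hw.1.1
    fun δ h₁ h₂ => eq_zero_of_eventually_add_smul_mem hw ?_
  have hY : ∀ᶠ t in 𝓝 (0 : ℝ), w + t • δ ∈ coverPolyhedron Ps := by
    filter_upwards [Ioo_mem_nhds neg_one_lt_zero zero_lt_one] with t ht
    convert convex_coverPolyhedron Ps h₁ h₂ (a := (1 + t) / 2) (b := (1 - t) / 2)
      (by linarith [ht.1]) (by linarith [ht.2]) (by ring) using 1
    module
  have hcap : ∀ e, ∀ᶠ t in 𝓝 (0 : ℝ), w e + t * δ e ≤ 2 := fun e =>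
    eventually_add_mul_le (hw.1.2.2 e) fun h => absurd h (lt_two_of_isMinOn hw.1 hmin e).ne
  filter_upwards [hY, eventually_all.2 hcap] with t hYt hct
  refine ⟨hYt, fun e he => ?_, fun e => by simpa using hct e⟩
  simp [eq_zero_of_add_sub_mem_of_lt_one hz hw.1 h₁ h₂ he, hw.1.2.1 e he]

theorem zero_or_one_of_mem_extremePoints_coverPolytope
    (hMFMC : ∀ y ∈ (coverPolyhedron Ps).extremePoints ℝ, ∀ e, ∃ n : ℤ, y e = n)
    (hz : z ∈ (coverPolytope Ps).extremePoints ℝ) (e : E) : z e = 0 ∨ z e = 1 := by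
  obtain ⟨w, hw, hmin⟩ := (isCompact_releasedCoverPolyhedron Ps z).exists_mem_extremePoints_isMinOn
    ⟨z, mem_releasedCoverPolyhedron_self hz.1⟩ (∑ e, ContinuousLinearMap.proj e)
  replace hmin : IsMinOn (fun v => ∑ e, v e) (releasedCoverPolyhedron Ps z) w :=
    isMinOn_iff.2 fun v hv => by simpa using isMinOn_iff.1 hmin v hv
  rcases (hz.1.2 e).lt_or_eq with he | he
  · obtain ⟨n, hn⟩ := hMFMC w (mem_extremePoints_coverPolyhedron_of_isMinOn hz hw hmin) e
    rw [hw.1.2.1 e he] at hn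
    have : n = 0 := by
      have h₀ : (0 : ℤ) ≤ n := by exact_mod_cast hn ▸ hz.1.1.1 e
      have h₁ : n < 1 := by exact_mod_cast hn ▸ he
      omega
    simp [hn, this]
  · exact Or.inr he

end ExtremePointsOfCoverPolytope

def IsCover {E : Type*} [DecidableEq E] (Ps : Finset (Finset E)) (C : Finset E) : Prop :=
  ∀ P ∈ Ps, (C ∩ P).Nonempty

theorem extremePoints_coverPolytope_subset {E : Type*} [Fintype E] [DecidableEq E]
    {Ps : Finset (Finset E)}
    (hMFMC : ∀ y ∈ (coverPolyhedron Ps).extremePoints ℝ, ∀ e, ∃ n : ℤ, y e = n) :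
    (coverPolytope Ps).extremePoints ℝ ⊆
      (fun C : Finset E => (C : Set E).indicator 1) '' {C | IsCover Ps C} := by
  intro z hz
  have h01 := zero_or_one_of_mem_extremePoints_coverPolytope hMFMC hz
  have hz_eq : (({e | z e = 1} : Finset E) : Set E).indicator 1 = z := by
    ext e
    rcases h01 e with h | h <;> simp [h]
  refine ⟨({e | z e = 1} : Finset E), fun P hP => ?_, hz_eq⟩
  by_contra hempty
  have hzP : ∑ e ∈ P, z e = 0 := sum_eq_zero fun e he => (h01 e).resolve_right fun h =>
    hempty ⟨e, mem_inter.2 ⟨by simpa using h, he⟩⟩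
  linarith [hz.1.1.2 P hP]

theorem coverPolytope_subset_convexHull {E : Type*} [Fintype E] [DecidableEq E]
    {Ps : Finset (Finset E)}
    (hMFMC : ∀ y ∈ (coverPolyhedron Ps).extremePoints ℝ, ∀ e, ∃ n : ℤ, y e = n) :
    coverPolytope Ps ⊆
      convexHull ℝ ((fun C : Finset E => (C : Set E).indicator 1) '' {C | IsCover Ps C}) :=
  calc coverPolytope Ps
      = closure (convexHull ℝ ((coverPolytope Ps).extremePoints ℝ)) :=
        (closure_convexHull_extremePoints (isCompact_coverPolytope Ps)
          (convex_coverPolytope Ps)).symm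
    _ ⊆ closure (convexHull ℝ _) :=
        closure_mono (convexHull_mono (extremePoints_coverPolytope_subset hMFMC))
    _ = _ := (((Set.toFinite _).image _).isClosed_convexHull ℝ).closure_eq

theorem prod_le_sum_of_nonempty {ι : Type*} {q : ι → ℝ} {s : Finset ι} (hs : s.Nonempty)
    (hq₀ : ∀ i ∈ s, 0 ≤ q i) (hq₁ : ∀ i ∈ s, q i ≤ 1) : ∏ i ∈ s, q i ≤ ∑ i ∈ s, q i := by
  classical
  obtain ⟨a, ha⟩ := hs
  calc ∏ i ∈ s, q i = q a * ∏ i ∈ s.erase a, q i := (mul_prod_erase s q ha).symm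
    _ ≤ q a := mul_le_of_le_one_right (hq₀ a ha)
        (prod_le_one (fun i hi => hq₀ i (mem_of_mem_erase hi))
          fun i hi => hq₁ i (mem_of_mem_erase hi))
    _ ≤ ∑ i ∈ s, q i := single_le_sum hq₀ ha

section BernoulliSubset

variable {E : Type*} [DecidableEq E] (q : E → ℝ) (C : Finset E)

def bernoulliSubset (S : Finset E) : ℝ :=
  if S ⊆ C then (∏ e ∈ S, (1 - q e)) * ∏ e ∈ C \ S, q e else 0

variable {q} in
theorem bernoulliSubset_nonneg (hq₀ : ∀ e, 0 ≤ q e) (hq₁ : ∀ e, q e ≤ 1) (S : Finset E) :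
    0 ≤ bernoulliSubset q C S := by
  unfold bernoulliSubset
  split_ifs
  · exact mul_nonneg (prod_nonneg fun e _ => sub_nonneg.2 (hq₁ e)) (prod_nonneg fun e _ => hq₀ e)
  · exact le_rfl

theorem bernoulliSubset_empty : bernoulliSubset q C ∅ = ∏ e ∈ C, q e := by
  simp [bernoulliSubset]

variable [Fintype E]

/-- Expand `∏ e ∈ C, ((1 - q e) [e ∉ A] + q e)` with `Finset.prod_add`. -/
theorem sum_bernoulliSubset_disjoint (A : Finset E) :
    ∑ S with Disjoint S A, bernoulliSubset q C S = ∏ e ∈ C ∩ A, q e := by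
  have hexpand := prod_add (fun e => if e ∉ A then 1 - q e else 0) q C
  simp only [prod_ite_zero, ← disjoint_left] at hexpand
  rw [← prod_ite_mem, sum_filter, ← sum_subset (subset_univ C.powerset)]
  · convert hexpand.symm using 1
    · refine sum_congr rfl fun S hS => ?_
      rw [bernoulliSubset, if_pos (mem_powerset.1 hS)]
      split_ifs <;> simp
    · exact prod_congr rfl fun e _ => by split_ifs <;> simp
  · intro S _ hS
    simp [bernoulliSubset, show ¬S ⊆ C by simpa using hS]

theorem sum_bernoulliSubset : ∑ S, bernoulliSubset q C S = 1 := by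
  simpa using sum_bernoulliSubset_disjoint q C ∅

theorem sum_bernoulliSubset_not_disjoint (A : Finset E) :
    ∑ S with ¬Disjoint S A, bernoulliSubset q C S = 1 - ∏ e ∈ C ∩ A, q e := by
  rw [← sum_bernoulliSubset q C, ← sum_filter_add_sum_filter_not univ (Disjoint · A),
    sum_bernoulliSubset_disjoint]
  ring

theorem sum_bernoulliSubset_mem (e : E) :
    ∑ S with e ∈ S, bernoulliSubset q C S = if e ∈ C then 1 - q e else 0 := by
  have h := sum_bernoulliSubset_not_disjoint q C {e}
  simp only [disjoint_singleton_right, not_not] at h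
  rw [h]
  split_ifs with he
  · simp [inter_singleton_of_mem he]
  · simp [inter_singleton_of_notMem he]

theorem sum_bernoulliSubset_inter_nonempty (P : Finset E) :
    ∑ S with (S ∩ P).Nonempty, bernoulliSubset q C S = 1 - ∏ e ∈ C ∩ P, q e := by
  simpa only [not_disjoint_iff_nonempty_inter] using sum_bernoulliSubset_not_disjoint q C P

end BernoulliSubset

section BernoulliMixture

variable {E ι : Type*} [DecidableEq E] [Fintype ι] {w : ι → ℝ} {C : ι → Finset E} {q : E → ℝ}

theorem isFeasibleDecomp_sum_mul_bernoulliSubset [Fintype E] {Ps : Finset (Finset E)}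
    {π : Finset E → ℝ} {ρ : E → ℝ}
    (hw₀ : ∀ i, 0 ≤ w i) (hw₁ : ∑ i, w i = 1) (hC : ∀ i, IsCover Ps (C i))
    (hq₀ : ∀ e, 0 ≤ q e) (hq₁ : ∀ e, q e ≤ 1)
    (hρ : ∀ e, (1 - q e) * ∑ i with e ∈ C i, w i = ρ e)
    (hπ : ∀ P ∈ Ps, π P ≤ 1 - ∑ e ∈ P, q e * ∑ i with e ∈ C i, w i) :
    IsFeasibleDecomp Ps π ρ (fun S => ∑ i, w i * bernoulliSubset q (C i) S) := by
  have hswap : ∀ s : Finset (Finset E), ∑ S ∈ s, ∑ i, w i * bernoulliSubset q (C i) S =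
      ∑ i, w i * ∑ S ∈ s, bernoulliSubset q (C i) S := fun s => by
    rw [sum_comm]; simp only [mul_sum]
  refine ⟨fun S => sum_nonneg fun i _ => mul_nonneg (hw₀ i) (bernoulliSubset_nonneg _ hq₀ hq₁ S),
    ?_, fun e => ?_, fun P hP => ?_⟩
  · simp only [hswap, sum_bernoulliSubset, mul_one, hw₁]
  · simp only [hswap, sum_bernoulliSubset_mem]
    rw [← hρ e, sum_filter, mul_sum]
    exact sum_congr rfl fun i _ => by split_ifs <;> ring
  · have hhit : ∀ i, 1 - ∑ e ∈ P, (if e ∈ C i then q e else 0) ≤ 1 - ∏ e ∈ C i ∩ P, q e := by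
      intro i
      rw [sum_ite_mem, inter_comm]
      exact sub_le_sub_left (prod_le_sum_of_nonempty (hC i P hP) (fun e _ => hq₀ e)
        fun e _ => hq₁ e) 1
    calc π P ≤ ∑ i, w i * (1 - ∑ e ∈ P, if e ∈ C i then q e else 0) := by
          convert hπ P hP using 1
          simp only [mul_sub, mul_one, sum_sub_distrib, hw₁, mul_sum, sum_filter]
          rw [sum_comm]
          congr 1
          exact sum_congr rfl fun e _ => sum_congr rfl fun i _ => by split_ifs <;> ring
      _ ≤ _ := by
          rw [hswap]
          exact sum_le_sum fun i _ => by
            rw [sum_bernoulliSubset_inter_nonempty]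
            exact mul_le_mul_of_nonneg_left (hhit i) (hw₀ i)

theorem sum_mul_bernoulliSubset_empty_pos (hw₀ : ∀ i, 0 ≤ w i) (hw₁ : ∑ i, w i = 1)
    (hq : ∀ e, 0 < q e) :
    0 < ∑ i, w i * bernoulliSubset q (C i) ∅ := by
  obtain ⟨i, -, hi⟩ := exists_lt_of_sum_lt (by simp [hw₁] : ∑ _i : ι, (0:ℝ) < ∑ i, w i)
  refine sum_pos' (fun j _ => mul_nonneg (hw₀ j) ?_) ⟨i, mem_univ i, mul_pos hi ?_⟩ <;>
    rw [bernoulliSubset_empty]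
  exacts [(prod_pos fun e _ => hq e).le, prod_pos fun e _ => hq e]

end BernoulliMixture

theorem exists_isFeasibleDecomp_of_mem_convexHull {E : Type*} [Fintype E] [DecidableEq E]
    {Ps : Finset (Finset E)} {π : Finset E → ℝ} {ρ y : E → ℝ}
    (hy : y ∈ convexHull ℝ ((fun C : Finset E => (C : Set E).indicator 1) '' {C | IsCover Ps C}))
    (hρ₀ : ∀ e, 0 ≤ ρ e) (hρy : ∀ e, ρ e < y e)
    (hπ : ∀ P ∈ Ps, π P ≤ 1 - ∑ e ∈ P, (y e - ρ e)) :
    ∃ x, IsFeasibleDecomp Ps π ρ x ∧ 0 < x ∅ := by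
  obtain ⟨ι, _, w, v, hw₀, hw₁, hv, hwv⟩ := mem_convexHull_iff_exists_fintype.1 hy
  choose C hC hCv using hv
  have hyC : ∀ e, y e = ∑ i with e ∈ C i, w i := fun e => by
    simp [← hwv, ← hCv, sum_filter, Set.indicator_apply]
  have hy₀ : ∀ e, 0 < y e := fun e => (hρ₀ e).trans_lt (hρy e)
  -- keeping `e` with probability `ρ e / y e` turns the coverage `y` into the marginals `ρ`
  refine ⟨_, isFeasibleDecomp_sum_mul_bernoulliSubset hw₀ hw₁ hC (q := fun e => 1 - ρ e / y e)
    (fun e => sub_nonneg.2 ((div_le_one (hy₀ e)).2 (hρy e).le))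
    (fun e => sub_le_self _ (div_nonneg (hρ₀ e) (hy₀ e).le)) (fun e => ?_) (fun P hP => ?_),
    sum_mul_bernoulliSubset_empty_pos hw₀ hw₁ fun e => sub_pos.2 ((div_lt_one (hy₀ e)).2 (hρy e))⟩
  · rw [← hyC, sub_sub_cancel, div_mul_cancel₀ _ (hy₀ e).ne']
  · convert hπ P hP using 2
    refine sum_congr rfl fun e _ => ?_
    rw [← hyC, sub_mul, one_mul, div_mul_cancel₀ _ (hy₀ e).ne']

/-- If `(E,𝒫)` has the weak MFMC property, `μ` is strictly positive, `ρ` satisfies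
condition (⋆) for `π_P = 1 − ∑_{e∈P} μ_e`, and every element with positive marginal
lies on a tight path, then `ρ` admits a feasible decomposition placing positive
probability on the empty set. -/
theorem feasible_decomposition_with_empty_set {E : Type*} [Fintype E] [DecidableEq E]
    (Ps : Finset (Finset E))
    (hMFMC : ∀ y ∈ Set.extremePoints ℝ (coverPolyhedron Ps), ∀ e, ∃ n : ℤ, y e = n)
    (μ : E → ℝ) (hμ : ∀ e, 0 < μ e ∧ μ e ≤ 1)
    (π : Finset E → ℝ) (hπ : ∀ P ∈ Ps, π P = 1 - ∑ e ∈ P, μ e)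
    (ρ : E → ℝ) (hρ : ∀ e, 0 ≤ ρ e ∧ ρ e ≤ 1)
    (hcond : ∀ P ∈ Ps, π P ≤ ∑ e ∈ P, ρ e)
    (htight : ∀ e : E, 0 < ρ e → ∃ P ∈ Ps, e ∈ P ∧ ∑ f ∈ P, ρ f = π P) :
    ∃ x : Finset E → ℝ, IsFeasibleDecomp Ps π ρ x ∧ 0 < x ∅ := by
  have hρ₁ : ∀ e, ρ e < 1 := fun e => by
    rcases (hρ e).1.eq_or_lt with h | h
    · linarith
    · obtain ⟨P, hP, heP, hPρ⟩ := htight e h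
      have := single_le_sum (fun f _ => (hρ f).1) heP
      have := single_le_sum (fun f _ => (hμ f).1.le) heP
      linarith [hπ P hP, (hμ e).1]
  have hρμ : ρ + μ ∈ coverPolyhedron Ps :=
    ⟨fun e => add_nonneg (hρ e).1 (hμ e).1.le, fun P hP => by
      simp only [Pi.add_apply, sum_add_distrib]
      linarith [hcond P hP, hπ P hP]⟩
  refine exists_isFeasibleDecomp_of_mem_convexHull
    (coverPolytope_subset_convexHull hMFMC (min_one_mem_coverPolytope hρμ)) (fun e => (hρ e).1)
    (fun e => lt_min (by simp [(hμ e).1]) (hρ₁ e)) fun P hP => ?_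
  rw [hπ P hP]
  gcongr with e
  linarith [min_le_left ((ρ + μ) e) 1, Pi.add_apply ρ μ e]
end

section
/- Let D = (V,A) be a DAG with s,t ∈ V, 𝒫 the set of s-t-paths, and π ∈ [0,1]^𝒫 satisfying the conservation law π_P + π_Q = π_{P×_e Q} + π_{Q×_e P} for all P,Q ∈ 𝒫 and e ∈ P∩Q. Define π̄(y) := ∑_{P∈𝒫} (1−π_P) y_P for y ∈ ℝ^𝒫 and y_e := ∑_{P∋e} y_P for e ∈ V∪A. Then for all z, z' ∈ ℝ_+^𝒫 with z_e ≥ z'_e for all e ∈ V∪A, it holds that π̄(z) ≥ π̄(z'). -/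
/-!
With `c := 1 - π ≥ 0` it suffices to find weights `μ ≥ 0` on nodes and arcs with
`∑_{e ∈ P} μ_e = c_P` for every path `P`, since then `π̄(z) - π̄(z') = ∑_e μ_e (z_e - z'_e) ≥ 0`.

For each node `w` pick a path `R w` through `w` that is cheapest among the paths with the same
suffix from `w`. Give `t` the weight `c(R t)` and an arc `(u, v)` the weight `c(K) - c(R v)`, where
`K` follows `R u` up to `u` and `R v` from `v`. The conservation law at `u` shows that along any
path `P` these arc weights telescope the potentials `c(P ×_w R w) - c(R w)`, which vanish at `s`
and equal `c_P - c(R t)` at `t`. They are nonnegative because `K` has the same suffix from `v` as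
`R v`. Acyclicity is what keeps splices of `s`-`t`-paths simple.
-/

open Finset

variable {V : Type*} [Fintype V] [DecidableEq V]

/-- `p` is a simple path from `s` to `v` in the digraph with arc set `Arcs`,
given as its sequence of nodes. -/
def IsPathOn (Arcs : Finset (V × V)) (s v : V) (p : List V) : Prop :=
  p.head? = some s ∧ p.getLast? = some v ∧ p.Nodup ∧
    p.Chain' (fun u w => (u, w) ∈ Arcs)

/-- The set of elements (nodes and arcs) of a path given by its node sequence. -/
def pathElems (p : List V) : Finset (V ⊕ V × V) :=
  p.toFinset.image Sum.inl ∪ (p.zip p.tail).toFinset.image Sum.inr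

/-- The splice `P ×_e Q` of two paths at a common element `e`: follow `P` up to `e`
and `Q` from `e` onwards. -/
def splice (p q : List V) (v : V) : List V :=
  p.takeWhile (· ≠ v) ++ q.dropWhile (· ≠ v)

/-- The digraph is acyclic. -/
def IsAcyclic (Arcs : Finset (V × V)) : Prop :=
  ∀ (v : V) (l : List V), List.Chain (fun u w => (u, w) ∈ Arcs) v l → v ∉ l

namespace List

variable {α : Type*}

theorem exists_eq_append_cons_cons_of_mem_zip_tail {u v : α} :
    ∀ {l : List α}, (u, v) ∈ l.zip l.tail → ∃ l₁ l₂, l = l₁ ++ u :: v :: l₂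
  | a :: b :: l, h => by
    rcases mem_cons.1 h with h | h
    · obtain ⟨rfl, rfl⟩ := Prod.mk.inj h
      exact ⟨[], l, rfl⟩
    · obtain ⟨l₁, l₂, hl⟩ := exists_eq_append_cons_cons_of_mem_zip_tail h
      exact ⟨a :: l₁, l₂, by rw [hl, cons_append]⟩

theorem Nodup.zip_tail {l : List α} (hl : l.Nodup) : (l.zip l.tail).Nodup :=
  Nodup.of_map Prod.snd <| by
    rw [map_snd_zip (by simp)]
    exact hl.sublist (tail_sublist l)

theorem sum_map_zip_tail_sub {M : Type*} [AddCommGroup M] (f : α → M) :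
    ∀ {l : List α} {a b : α}, l.head? = some a → l.getLast? = some b →
      ((l.zip l.tail).map fun e => f e.2 - f e.1).sum = f b - f a
  | [a], _, _, rfl, rfl => by simp
  | a :: b :: l, _, _, rfl, hl => by
    have ih := sum_map_zip_tail_sub f (l := b :: l) rfl (by rwa [getLast?_cons_cons] at hl)
    rw [tail_cons] at ih
    rw [tail_cons, zip_cons_cons, map_cons, sum_cons, ih]
    abel

theorem Nodup.notMem_of_append_cons {a : α} {l₁ l₂ : List α} (h : (l₁ ++ a :: l₂).Nodup) :
    a ∉ l₁ :=
  fun ha => disjoint_of_nodup_append h ha mem_cons_self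

variable [DecidableEq α]

theorem notMem_takeWhile_ne (a : α) (l : List α) : a ∉ l.takeWhile (· ≠ a) :=
  fun h => by simpa using mem_takeWhile_imp h

theorem takeWhile_ne_append_cons {a : α} {l₁ : List α} (h : a ∉ l₁) (l₂ : List α) :
    (l₁ ++ a :: l₂).takeWhile (· ≠ a) = l₁ := by
  rw [takeWhile_append_of_pos fun x hx => by simpa using ne_of_mem_of_not_mem hx h]
  simp

theorem dropWhile_ne_append_cons {a : α} {l₁ : List α} (h : a ∉ l₁) (l₂ : List α) :
    (l₁ ++ a :: l₂).dropWhile (· ≠ a) = a :: l₂ := by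
  rw [dropWhile_append_of_pos fun x hx => by simpa using ne_of_mem_of_not_mem hx h]
  simp

theorem exists_dropWhile_ne_eq_cons {a : α} : ∀ {l : List α}, a ∈ l →
    ∃ r, l.dropWhile (· ≠ a) = a :: r
  | b :: l, h => by
    by_cases hb : b = a
    · exact ⟨l, by simp [hb]⟩
    · simpa [hb] using exists_dropWhile_ne_eq_cons ((mem_cons.1 h).resolve_left (Ne.symm hb))

end List

section Splice

variable {α : Type*} [DecidableEq α] {p q r : List α}

open List

theorem splice_of_head?_eq {a : α} (hp : p.head? = some a) (hq : q.head? = some a) :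
    splice p q a = q := by
  obtain ⟨p', rfl⟩ := head?_eq_some_iff.1 hp
  obtain ⟨q', rfl⟩ := head?_eq_some_iff.1 hq
  simp [splice]

theorem splice_of_getLast?_eq {a : α} (hp : p.Nodup) (hq : q.Nodup)
    (hp' : p.getLast? = some a) (hq' : q.getLast? = some a) : splice p q a = p := by
  obtain ⟨p', rfl⟩ := getLast?_eq_some_iff.1 hp'
  obtain ⟨q', rfl⟩ := getLast?_eq_some_iff.1 hq'
  rw [splice, takeWhile_ne_append_cons hp.notMem_of_append_cons,
    dropWhile_ne_append_cons hq.notMem_of_append_cons]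

theorem splice_eq_of_mem_zip_tail {u v : α} (hp : p.Nodup) (huv : (u, v) ∈ p.zip p.tail) :
    splice p q v = p.takeWhile (· ≠ u) ++ u :: q.dropWhile (· ≠ v) := by
  obtain ⟨l₁, l₂, rfl⟩ := exists_eq_append_cons_cons_of_mem_zip_tail huv
  have hu : u ∉ l₁ := hp.notMem_of_append_cons
  have hv : v ∉ l₁ ++ [u] :=
    (show (l₁ ++ [u] ++ v :: l₂).Nodup by simpa using hp).notMem_of_append_cons
  rw [splice, takeWhile_ne_append_cons hu,
    show l₁ ++ u :: v :: l₂ = l₁ ++ [u] ++ v :: l₂ by simp, takeWhile_ne_append_cons hv]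
  simp

theorem splice_splice_left_of_mem_zip_tail {u v : α} (hp : p.Nodup)
    (huv : (u, v) ∈ p.zip p.tail) :
    splice (splice p q v) r u = splice p r u := by
  rw [splice_eq_of_mem_zip_tail hp huv, splice, splice,
    takeWhile_ne_append_cons (notMem_takeWhile_ne u p)]

theorem splice_splice_right_of_mem_zip_tail {u v : α} (hp : p.Nodup)
    (huv : (u, v) ∈ p.zip p.tail) :
    splice r (splice p q v) u = r.takeWhile (· ≠ u) ++ u :: q.dropWhile (· ≠ v) := by
  rw [splice_eq_of_mem_zip_tail hp huv, splice,
    dropWhile_ne_append_cons (notMem_takeWhile_ne u p)]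

end Splice

section Paths

variable {α : Type*} {Arcs : Finset (α × α)} {s t v : α} {p₁ p₂ q₁ q₂ : List α}

open List

theorem IsPathOn.append_cons (hacyc : IsAcyclic Arcs) (hp : IsPathOn Arcs s t (p₁ ++ v :: p₂))
    (hq : IsPathOn Arcs s t (q₁ ++ v :: q₂)) : IsPathOn Arcs s t (p₁ ++ v :: q₂) := by
  obtain ⟨hph, -, hpn, hpc⟩ := hp
  obtain ⟨-, hql, hqn, hqc⟩ := hq
  unfold List.Chain' at hpc hqc
  refine ⟨by simpa [head?_append] using hph, by simpa [getLast?_append] using hql, ?_, ?_⟩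
  · refine nodup_append.2 ⟨hpn.sublist (sublist_append_left _ _),
      hqn.sublist (sublist_append_right _ _), ?_⟩
    rintro x hx y hy rfl
    rcases mem_cons.1 hy with rfl | hy
    · exact hpn.notMem_of_append_cons hx
    · obtain ⟨a, b, rfl⟩ := append_of_mem hx
      obtain ⟨c, d, rfl⟩ := append_of_mem hy
      have hcycle : IsChain (fun u w => (u, w) ∈ Arcs) (x :: (b ++ v :: (c ++ [x]))) :=
        isChain_cons_split.2 ⟨hpc.infix ⟨a, p₂, by simp⟩, hqc.infix ⟨q₁, d, by simp⟩⟩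
      exact hacyc x _ hcycle (by simp)
  · unfold List.Chain'
    rw [isChain_append] at hpc hqc ⊢
    exact ⟨hpc.1, hqc.2.1, hpc.2.2⟩

variable [DecidableEq α] {p q : List α}

theorem IsPathOn.splice (hacyc : IsAcyclic Arcs) (hp : IsPathOn Arcs s t p)
    (hq : IsPathOn Arcs s t q) (hvp : v ∈ p) (hvq : v ∈ q) :
    IsPathOn Arcs s t (splice p q v) := by
  obtain ⟨p', hp'⟩ := exists_dropWhile_ne_eq_cons hvp
  obtain ⟨q', hq'⟩ := exists_dropWhile_ne_eq_cons hvq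
  rw [_root_.splice, hq']
  rw [← takeWhile_append_dropWhile (p := (· ≠ v)) (l := p), hp'] at hp
  rw [← takeWhile_append_dropWhile (p := (· ≠ v)) (l := q), hq'] at hq
  exact hp.append_cons hacyc hq

structure IsSpliceClosedFamily (Ps : Finset (List α)) (s t : α) : Prop where
  nodup : ∀ p ∈ Ps, p.Nodup
  head?_eq : ∀ p ∈ Ps, p.head? = some s
  getLast?_eq : ∀ p ∈ Ps, p.getLast? = some t
  splice_mem : ∀ p ∈ Ps, ∀ q ∈ Ps, ∀ v, v ∈ p → v ∈ q → splice p q v ∈ Ps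

theorem IsAcyclic.isSpliceClosedFamily (hacyc : IsAcyclic Arcs) {Ps : Finset (List α)}
    (hPs : ∀ p, p ∈ Ps ↔ IsPathOn Arcs s t p) : IsSpliceClosedFamily Ps s t where
  nodup p hp := ((hPs p).1 hp).2.2.1
  head?_eq p hp := ((hPs p).1 hp).1
  getLast?_eq p hp := ((hPs p).1 hp).2.1
  splice_mem p hp q hq _ hvp hvq :=
    (hPs _).2 (((hPs p).1 hp).splice hacyc ((hPs q).1 hq) hvp hvq)

end Paths

section Weights

variable {α : Type*} [DecidableEq α]

open List

def SpliceConservative (Ps : Finset (List α)) (c : List α → ℝ) : Prop :=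
  ∀ p ∈ Ps, ∀ q ∈ Ps, ∀ v, v ∈ p → v ∈ q → c (splice p q v) + c (splice q p v) = c p + c q

def IsCheapestWithSuffix (Ps : Finset (List α)) (c : List α → ℝ) (w : α) (r : List α) : Prop :=
  r ∈ Ps ∧ w ∈ r ∧
    ∀ q ∈ Ps, w ∈ q → q.dropWhile (· ≠ w) = r.dropWhile (· ≠ w) → c r ≤ c q

theorem exists_isCheapestWithSuffix {Ps : Finset (List α)} (c : List α → ℝ) {w : α}
    {p : List α} (hp : p ∈ Ps) (hw : w ∈ p) : ∃ r, IsCheapestWithSuffix Ps c w r := by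
  obtain ⟨r, hr, hmin⟩ := Finset.exists_min_image
    {q ∈ Ps | w ∈ q ∧ q.dropWhile (· ≠ w) = p.dropWhile (· ≠ w)} c ⟨p, by simp [hp, hw]⟩
  rw [Finset.mem_filter] at hr
  exact ⟨r, hr.1, hr.2.1, fun q hq hwq hqr =>
    hmin q (Finset.mem_filter.2 ⟨hq, hwq, hqr.trans hr.2.2⟩)⟩

def arcPath (R : α → List α) (u v : α) : List α :=
  (R u).takeWhile (· ≠ u) ++ u :: (R v).dropWhile (· ≠ v)

def elemWeight (c : List α → ℝ) (R : α → List α) (t : α) : α ⊕ α × α → ℝ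
  | .inl w => if w = t then c (R t) else 0
  | .inr (u, v) => c (arcPath R u v) - c (R v)

def prefixPotential (c : List α → ℝ) (R : α → List α) (p : List α) (w : α) : ℝ :=
  c (splice p (R w) w) - c (R w)

variable {Ps : Finset (List α)} {s t : α} {c : List α → ℝ} {R : α → List α} {p : List α}
  {u v : α}

theorem sum_pathElems (μ : α ⊕ α × α → ℝ) (hp : p.Nodup) :
    ∑ e ∈ pathElems p, μ e =
      ∑ w ∈ p.toFinset, μ (.inl w) + ((p.zip p.tail).map fun e => μ (.inr e)).sum := by
  rw [pathElems, Finset.sum_union (Finset.disjoint_left.2 (by simp)),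
    Finset.sum_image Sum.inl_injective.injOn, Finset.sum_image Sum.inr_injective.injOn,
    sum_toFinset _ hp.zip_tail]

namespace IsSpliceClosedFamily

variable (hPs : IsSpliceClosedFamily Ps s t)
include hPs

theorem splice_mem_of_mem_zip_tail (hp : p ∈ Ps) (huv : (u, v) ∈ p.zip p.tail) {q : List α}
    (hq : q ∈ Ps) (hvq : v ∈ q) : splice p q v ∈ Ps ∧ u ∈ splice p q v := by
  refine ⟨hPs.splice_mem p hp q hq v (mem_of_mem_tail (of_mem_zip huv).2) hvq, ?_⟩
  rw [splice_eq_of_mem_zip_tail (hPs.nodup p hp) huv]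
  exact mem_append_right _ mem_cons_self

section

variable (hR : ∀ p ∈ Ps, ∀ w ∈ p, IsCheapestWithSuffix Ps c w (R w))
include hR

theorem elemWeight_inr_eq (hc : SpliceConservative Ps c) (hp : p ∈ Ps)
    (huv : (u, v) ∈ p.zip p.tail) :
    elemWeight c R t (.inr (u, v)) = prefixPotential c R p v - prefixPotential c R p u := by
  have hnd := hPs.nodup p hp
  obtain ⟨hRu, huRu, -⟩ := hR p hp u (of_mem_zip huv).1
  obtain ⟨hRv, hvRv, -⟩ := hR p hp v (mem_of_mem_tail (of_mem_zip huv).2)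
  obtain ⟨hP', huP'⟩ := hPs.splice_mem_of_mem_zip_tail hp huv hRv hvRv
  have hcons := hc _ hP' (R u) hRu u huP' huRu
  rw [splice_splice_left_of_mem_zip_tail hnd huv,
    splice_splice_right_of_mem_zip_tail hnd huv] at hcons
  simp only [elemWeight, prefixPotential, arcPath]
  linarith

theorem elemWeight_inr_nonneg (hp : p ∈ Ps) (huv : (u, v) ∈ p.zip p.tail) :
    0 ≤ elemWeight c R t (.inr (u, v)) := by
  have hnd := hPs.nodup p hp
  have hv : v ∈ p := mem_of_mem_tail (of_mem_zip huv).2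
  obtain ⟨hRu, huRu, -⟩ := hR p hp u (of_mem_zip huv).1
  obtain ⟨hRv, hvRv, hRv_min⟩ := hR p hp v hv
  obtain ⟨hP', huP'⟩ := hPs.splice_mem_of_mem_zip_tail hp huv hRv hvRv
  have hK : arcPath R u v ∈ Ps := by
    rw [arcPath, ← splice_splice_right_of_mem_zip_tail hnd huv]
    exact hPs.splice_mem _ hRu _ hP' u huRu huP'
  obtain ⟨r, hr⟩ := exists_dropWhile_ne_eq_cons hvRv
  have hKeq : arcPath R u v = ((R u).takeWhile (· ≠ u) ++ [u]) ++ v :: r := by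
    rw [arcPath, hr]
    simp
  have hvK := (hKeq ▸ hPs.nodup _ hK).notMem_of_append_cons
  have hcheap := hRv_min _ hK (by rw [hKeq]; simp)
    (by rw [hKeq, dropWhile_ne_append_cons hvK, hr])
  simp only [elemWeight]
  linarith

theorem elemWeight_nonneg (hc0 : ∀ p ∈ Ps, 0 ≤ c p) (hp : p ∈ Ps) {e : α ⊕ α × α}
    (he : e ∈ pathElems p) : 0 ≤ elemWeight c R t e := by
  rcases e with w | ⟨u, v⟩
  · simp only [elemWeight]
    split_ifs
    · exact hc0 _ (hR p hp t (mem_of_getLast? (hPs.getLast?_eq p hp))).1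
    · exact le_rfl
  · exact hPs.elemWeight_inr_nonneg hR hp (by simpa [pathElems] using he)

theorem sum_elemWeight_pathElems (hc : SpliceConservative Ps c) (hp : p ∈ Ps) :
    ∑ e ∈ pathElems p, elemWeight c R t e = c p := by
  have hnd := hPs.nodup p hp
  have hs : s ∈ p := mem_of_mem_head? (hPs.head?_eq p hp)
  have ht : t ∈ p := mem_of_getLast? (hPs.getLast?_eq p hp)
  have hRs := (hR p hp s hs).1
  have hRt := (hR p hp t ht).1
  have hnodes : ∑ w ∈ p.toFinset, elemWeight c R t (.inl w) = c (R t) := by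
    simp [elemWeight, ht]
  have harcs : ((p.zip p.tail).map fun e => elemWeight c R t (.inr e)).sum =
      prefixPotential c R p t - prefixPotential c R p s := by
    rw [map_congr_left fun e he => hPs.elemWeight_inr_eq hR hc hp he]
    exact sum_map_zip_tail_sub _ (hPs.head?_eq p hp) (hPs.getLast?_eq p hp)
  have hφs : prefixPotential c R p s = 0 := by
    rw [prefixPotential, splice_of_head?_eq (hPs.head?_eq p hp) (hPs.head?_eq _ hRs), sub_self]
  have hφt : prefixPotential c R p t = c p - c (R t) := by
    rw [prefixPotential, splice_of_getLast?_eq hnd (hPs.nodup _ hRt) (hPs.getLast?_eq p hp)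
      (hPs.getLast?_eq _ hRt)]
  rw [sum_pathElems _ hnd, hnodes, harcs, hφs, hφt]
  ring

end

theorem exists_nonneg_weights_sum_pathElems_eq (hc : SpliceConservative Ps c)
    (hc0 : ∀ p ∈ Ps, 0 ≤ c p) :
    ∃ μ : α ⊕ α × α → ℝ, (∀ p ∈ Ps, ∀ e ∈ pathElems p, 0 ≤ μ e) ∧
      ∀ p ∈ Ps, ∑ e ∈ pathElems p, μ e = c p := by
  choose! R hR using fun w (h : ∃ p ∈ Ps, w ∈ p) =>
    exists_isCheapestWithSuffix c h.choose_spec.1 h.choose_spec.2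
  have hR' : ∀ p ∈ Ps, ∀ w ∈ p, IsCheapestWithSuffix Ps c w (R w) :=
    fun p hp w hw => hR w ⟨p, hp, hw⟩
  exact ⟨elemWeight c R t, fun p hp _ => hPs.elemWeight_nonneg hR' hc0 hp,
    fun p hp => hPs.sum_elemWeight_pathElems hR' hc hp⟩

end IsSpliceClosedFamily

end Weights

theorem Finset.sum_sum_mul_eq_sum_biUnion_mul_sum_filter {ι E : Type*} [DecidableEq E]
    (Ps : Finset ι) (elems : ι → Finset E) (μ : E → ℝ) (y : ι → ℝ) :
    ∑ p ∈ Ps, (∑ e ∈ elems p, μ e) * y p =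
      ∑ e ∈ Ps.biUnion elems, μ e * ∑ p ∈ Ps with e ∈ elems p, y p := by
  simp_rw [Finset.sum_mul, Finset.mul_sum]
  exact Finset.sum_comm' fun p e => by simp only [Finset.mem_biUnion, Finset.mem_filter]; grind

theorem sum_mul_le_sum_mul_of_load_le {ι E : Type*} [DecidableEq E] {Ps : Finset ι}
    {elems : ι → Finset E} {μ : E → ℝ} {c : ι → ℝ} (hμ : ∀ p ∈ Ps, ∀ e ∈ elems p, 0 ≤ μ e)
    (hc : ∀ p ∈ Ps, ∑ e ∈ elems p, μ e = c p) {y y' : ι → ℝ}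
    (hload : ∀ e, ∑ p ∈ Ps with e ∈ elems p, y' p ≤ ∑ p ∈ Ps with e ∈ elems p, y p) :
    ∑ p ∈ Ps, c p * y' p ≤ ∑ p ∈ Ps, c p * y p := by
  have hc' (y : ι → ℝ) : ∑ p ∈ Ps, c p * y p = ∑ p ∈ Ps, (∑ e ∈ elems p, μ e) * y p :=
    Finset.sum_congr rfl fun p hp => by rw [hc p hp]
  rw [hc', hc', Finset.sum_sum_mul_eq_sum_biUnion_mul_sum_filter,
    Finset.sum_sum_mul_eq_sum_biUnion_mul_sum_filter]
  refine Finset.sum_le_sum fun e he => ?_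
  obtain ⟨p, hp, hep⟩ := Finset.mem_biUnion.1 he
  exact mul_le_mul_of_nonneg_left (hload e) (hμ p hp e hep)

theorem pibar_monotone_general
    (Arcs : Finset (V × V)) (s t : V) (hacyc : IsAcyclic Arcs)
    (Ps : Finset (List V)) (hPs : ∀ p : List V, p ∈ Ps ↔ IsPathOn Arcs s t p)
    (π : List V → ℝ) (hπ01 : ∀ p ∈ Ps, 0 ≤ π p ∧ π p ≤ 1)
    (hcons : ∀ p ∈ Ps, ∀ q ∈ Ps, ∀ v : V, v ∈ p → v ∈ q →
      π (splice p q v) + π (splice q p v) = π p + π q)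
    (z z' : List V → ℝ)
    (hload : ∀ e : V ⊕ V × V,
      ∑ p ∈ Ps.filter (fun p => e ∈ pathElems p), z' p ≤
        ∑ p ∈ Ps.filter (fun p => e ∈ pathElems p), z p) :
    ∑ p ∈ Ps, (1 - π p) * z' p ≤ ∑ p ∈ Ps, (1 - π p) * z p := by
  have hcons' : SpliceConservative Ps (fun p => 1 - π p) := fun p hp q hq v hvp hvq => by
    linarith [hcons p hp q hq v hvp hvq]
  obtain ⟨μ, hμ, hμc⟩ := (hacyc.isSpliceClosedFamily hPs).exists_nonneg_weights_sum_pathElems_eq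
    hcons' fun p hp => sub_nonneg.2 (hπ01 p hp).2
  exact sum_mul_le_sum_mul_of_load_le hμ hμc hload

/-- Monotonicity of `π̄(y) = ∑_P (1−π_P) y_P` under the conservation law: if
`z, z' ≥ 0` and the load of `z` dominates the load of `z'` on every node and arc,
then `π̄(z) ≥ π̄(z')`. -/
theorem pibar_monotone
    (Arcs : Finset (V × V)) (s t : V) (hacyc : IsAcyclic Arcs)
    (Ps : Finset (List V)) (hPs : ∀ p : List V, p ∈ Ps ↔ IsPathOn Arcs s t p)
    (π : List V → ℝ) (hπ01 : ∀ p ∈ Ps, 0 ≤ π p ∧ π p ≤ 1)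
    (hcons : ∀ p ∈ Ps, ∀ q ∈ Ps, ∀ v : V, v ∈ p → v ∈ q →
      π (splice p q v) + π (splice q p v) = π p + π q)
    (z z' : List V → ℝ)
    (hz : ∀ p ∈ Ps, 0 ≤ z p) (hz' : ∀ p ∈ Ps, 0 ≤ z' p)
    (hload : ∀ e : V ⊕ V × V,
      ∑ p ∈ Ps.filter (fun p => e ∈ pathElems p), z' p ≤
        ∑ p ∈ Ps.filter (fun p => e ∈ pathElems p), z p) :
    ∑ p ∈ Ps, (1 - π p) * z' p ≤ ∑ p ∈ Ps, (1 - π p) * z p :=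
  pibar_monotone_general Arcs s t hacyc Ps hPs π hπ01 hcons z z' hload
end
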